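/- Let κ and λ be infinite cardinals, let S be a ⟨∨,0⟩-semilattice, let (a_ξ)_{ξ<κ} be an increasing family in S with a_0 = 0 and let (b_η)_{η<λ} be a decreasing family in S with a_ξ ≤ b_η for all ξ < κ and η < λ, and let μ(x,y) = σ(x \ y) for x, y ∈ P_{κ,λ}. Suppose there exist a lattice L, a homomorphism of partial lattices f : P_{κ,λ} → L, and an S-valued measure ν on L such that μ(x,y) = ν(f(x), f(y)) for all x, y ∈ P_{κ,λ}. Then there exists c ∈ S such that a_ξ ≤ c ≤ b_η for all ξ < κ and η < λ. -/

import Mathlib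

/-!
The triple `⟨κ, ∅, ∅⟩` of `A_{κ,λ}` lies above every initial segment `⟨[0,ξ], ∅, ∅⟩`, whose
measure `μ(·, 0)` is `a_ξ`, and below every tail `⟨κ, [η,λ), [η,λ)⟩`, whose measure is `b_η`;
but it is not in `P_{κ,λ}`. In `L` its role is played by `m = f⟨κ,λ,∅⟩ ∧ f⟨κ,∅,λ⟩`: it lies
above the images of the initial segments by monotonicity of `f`, and below the image of each
tail because `f` preserves the meet `⟨κ,λ,[η,λ)⟩ ∧ ⟨κ,[η,λ),λ⟩`. A measure is monotone in its
first argument, so `c = ν(m, f 0)` interpolates.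
-/

open Set Cardinal

/-- Membership in the Boolean subalgebra of the powerset of `P` generated by the
lower subsets of `P`: the smallest family of subsets of `P` containing all lower
sets and closed under complementation and (binary) union (hence also under binary
intersection, and containing `∅` and `P`). -/
inductive IntMem (P : Type*) [Preorder P] : Set P → Prop
  | lower (s : Set P) : IsLowerSet s → IntMem P s
  | compl (s : Set P) : IntMem P s → IntMem P sᶜ
  | union (s t : Set P) : IntMem P s → IntMem P t → IntMem P (s ∪ t)

/-- `Int P`: the Boolean subalgebra of the powerset of `P` generated by the lower subsets
of `P`, viewed as a set of subsets of `P`. -/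
def IntP (P : Type*) [Preorder P] : Set (Set P) := {s | IntMem P s}

open Classical in
/-- `χ_o` : sends a subset of `{β | β < o}` to `false` if it is bounded (contained in some
`α < o`) and to `true` otherwise. -/
noncomputable def chiO (o : Ordinal) (x : Set ↥(Set.Iio o)) : Bool :=
  if ∃ α < o, ∀ β ∈ x, (β : Ordinal) < α then false else true

/-- The ambient Boolean algebra `(Set κ) × (Set λ) × (Set λ)` in which
`A_{κ,λ} = Int κ × Int λ × Int λ` lives. -/
abbrev Amb (κ lam : Cardinal) : Type _ :=
  Set ↥(Set.Iio κ.ord) × Set ↥(Set.Iio lam.ord) × Set ↥(Set.Iio lam.ord)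

/-- `A_{κ,λ} = Int κ × Int λ × Int λ`. -/
def ASet (κ lam : Cardinal) : Set (Amb κ lam) :=
  {p | p.1 ∈ IntP ↥(Set.Iio κ.ord) ∧ p.2.1 ∈ IntP ↥(Set.Iio lam.ord) ∧
       p.2.2 ∈ IntP ↥(Set.Iio lam.ord)}

/-- `U_{κ,λ} = {⟨x0,x1,x2⟩ ∈ A_{κ,λ} : χ_κ(x0) = χ_λ(x1) = χ_λ(x2)}`. -/
def USet (κ lam : Cardinal) : Set (Amb κ lam) :=
  {p ∈ ASet κ lam | chiO κ.ord p.1 = chiO lam.ord p.2.1 ∧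
    chiO lam.ord p.2.1 = chiO lam.ord p.2.2}

/-- `V_{κ,λ} = {⟨x0,x1,x2⟩ ∈ A_{κ,λ} : χ_κ(x0) = χ_λ(x1)}`. -/
def VSet (κ lam : Cardinal) : Set (Amb κ lam) :=
  {p ∈ ASet κ lam | chiO κ.ord p.1 = chiO lam.ord p.2.1}

/-- `P*_{κ,λ} = {⟨x0,x1,x2⟩ ∈ A_{κ,λ} : χ_κ(x0) = 0 or x1 ∪ x2 ≠ ∅}`. -/
def PstarSet (κ lam : Cardinal) : Set (Amb κ lam) :=
  {p ∈ ASet κ lam | chiO κ.ord p.1 = false ∨ p.2.1 ∪ p.2.2 ≠ ∅}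

/-- `P_{κ,λ} = {⟨x0,x1,x2⟩ ∈ A_{κ,λ} : χ_κ(x0) = χ_λ(x1) ∨ χ_λ(x2)}`. -/
def PkSet (κ lam : Cardinal) : Set (Amb κ lam) :=
  {p ∈ ASet κ lam | chiO κ.ord p.1 = chiO lam.ord p.2.1 ⊔ chiO lam.ord p.2.2}

open Classical in
/-- The map `σ = σ_{⃗a,⃗b} : P*_{κ,λ} → S` : `σ(⟨x0,x1,x2⟩) = a_{sup x0}` if
`x1 ∪ x2 = ∅` (in which case `x0` is bounded, so `sup x0 < κ`), and
`σ(⟨x0,x1,x2⟩) = b_{min (x1 ∪ x2)}` otherwise.  (Outside of `P*_{κ,λ}` the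
value of this function is irrelevant; junk value `⊥` is used when the
corresponding index is out of range.) -/
noncomputable def sigmaM (κ lam : Cardinal) {S : Type*} [SemilatticeSup S] [OrderBot S]
    (a : ↥(Set.Iio κ.ord) → S) (b : ↥(Set.Iio lam.ord) → S) (p : Amb κ lam) : S :=
  if p.2.1 ∪ p.2.2 = ∅ then
    if h : sSup (Subtype.val '' p.1) < κ.ord then a ⟨sSup (Subtype.val '' p.1), h⟩ else ⊥
  else
    if h : sInf (Subtype.val '' (p.2.1 ∪ p.2.2)) < lam.ord then
      b ⟨sInf (Subtype.val '' (p.2.1 ∪ p.2.2)), h⟩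
    else ⊥

/-- The measure `μ = μ_{⃗a,⃗b}` on `P_{κ,λ}` : `μ(x, y) = σ(x \ y)`. -/
noncomputable def muM (κ lam : Cardinal) {S : Type*} [SemilatticeSup S] [OrderBot S]
    (a : ↥(Set.Iio κ.ord) → S) (b : ↥(Set.Iio lam.ord) → S) (p q : Amb κ lam) : S :=
  sigmaM κ lam a b (p \ q)

theorem IsLowerSet.mem_IntP {P : Type*} [Preorder P] {s : Set P} (hs : IsLowerSet s) :
    s ∈ IntP P :=
  IntMem.lower _ hs

theorem IsUpperSet.mem_IntP {P : Type*} [Preorder P] {s : Set P} (hs : IsUpperSet s) :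
    s ∈ IntP P := by
  show IntMem P s
  simpa using IntMem.compl _ (IntMem.lower _ hs.compl)

section Chi

variable {o : Ordinal}

lemma chiO_eq_false {x : Set ↥(Set.Iio o)} {α : Ordinal} (hα : α < o)
    (hx : ∀ β ∈ x, (β : Ordinal) < α) : chiO o x = false := by
  simp only [chiO]
  exact if_pos ⟨α, hα, hx⟩

lemma chiO_eq_true {x : Set ↥(Set.Iio o)} (hx : ∀ α < o, ∃ β ∈ x, α ≤ (β : Ordinal)) :
    chiO o x = true := by
  simp only [chiO]
  refine if_neg fun ⟨α, hα, hbound⟩ => ?_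
  obtain ⟨β, hβ, hαβ⟩ := hx α hα
  exact (hbound β hβ).not_ge hαβ

lemma chiO_empty (h0 : 0 < o) : chiO o ∅ = false :=
  chiO_eq_false h0 (by simp)

lemma chiO_univ : chiO o univ = true :=
  chiO_eq_true fun α hα => ⟨⟨α, hα⟩, mem_univ _, le_rfl⟩

lemma chiO_Iic (ho : Order.IsSuccLimit o) (ξ : ↥(Set.Iio o)) : chiO o (Iic ξ) = false :=
  chiO_eq_false (ho.succ_lt ξ.2) fun _ hβ => Order.lt_succ_of_le hβ

lemma chiO_Ici (η : ↥(Set.Iio o)) : chiO o (Ici η) = true :=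
  chiO_eq_true fun α hα =>
    ⟨⟨max α η, max_lt hα η.2⟩, le_max_right (α : Ordinal) η, le_max_left _ _⟩

lemma sSup_image_val_Iic (ξ : ↥(Set.Iio o)) : sSup (Subtype.val '' Iic ξ) = ξ :=
  IsGreatest.csSup_eq ⟨⟨ξ, le_refl ξ, rfl⟩, by rintro _ ⟨β, hβ, rfl⟩; exact hβ⟩

lemma sInf_image_val_Ici (η : ↥(Set.Iio o)) : sInf (Subtype.val '' Ici η) = η :=
  IsLeast.csInf_eq ⟨⟨η, le_refl η, rfl⟩, by rintro _ ⟨β, hβ, rfl⟩; exact hβ⟩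

end Chi

section Triples

variable {κ lam : Cardinal}

lemma bounded_mem_PkSet {x : Set ↥(Set.Iio κ.ord)} (hx : x ∈ IntP _) (hxχ : chiO κ.ord x = false)
    (hlam : 0 < lam.ord) : ((x, ∅, ∅) : Amb κ lam) ∈ PkSet κ lam :=
  ⟨⟨hx, isLowerSet_empty.mem_IntP, isLowerSet_empty.mem_IntP⟩,
    by simp [hxχ, chiO_empty hlam]⟩

lemma unbounded_mem_PkSet {x₁ x₂ : Set ↥(Set.Iio lam.ord)} (hx₁ : x₁ ∈ IntP _)
    (hx₂ : x₂ ∈ IntP _) (hχ : chiO lam.ord x₁ = true ∨ chiO lam.ord x₂ = true) :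
    ((univ, x₁, x₂) : Amb κ lam) ∈ PkSet κ lam :=
  ⟨⟨isLowerSet_univ.mem_IntP, hx₁, hx₂⟩, by
    rcases hχ with h | h <;> simp [chiO_univ, h]⟩

lemma Iic_mem_PkSet (hκ : Order.IsSuccLimit κ.ord) (hlam : 0 < lam.ord) (ξ : ↥(Set.Iio κ.ord)) :
    ((Iic ξ, ∅, ∅) : Amb κ lam) ∈ PkSet κ lam :=
  bounded_mem_PkSet (isLowerSet_Iic ξ).mem_IntP (chiO_Iic hκ ξ) hlam

lemma Ici_mem_PkSet (η : ↥(Set.Iio lam.ord)) :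
    ((univ, Ici η, Ici η) : Amb κ lam) ∈ PkSet κ lam :=
  unbounded_mem_PkSet (isUpperSet_Ici η).mem_IntP (isUpperSet_Ici η).mem_IntP (.inl (chiO_Ici η))

variable {S : Type*} [SemilatticeSup S] [OrderBot S]
  (a : ↥(Set.Iio κ.ord) → S) (b : ↥(Set.Iio lam.ord) → S)

lemma muM_bot (p : Amb κ lam) : muM κ lam a b p ⊥ = sigmaM κ lam a b p := by
  simp [muM]

lemma sigmaM_Iic (ξ : ↥(Set.Iio κ.ord)) :
    sigmaM κ lam a b (Iic ξ, ∅, ∅) = a ξ := by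
  have hsup := sSup_image_val_Iic ξ
  rw [sigmaM, if_pos (by simp), dif_pos (hsup ▸ ξ.2)]
  exact congrArg a (Subtype.ext hsup)

lemma sigmaM_Ici (x : Set ↥(Set.Iio κ.ord)) (η : ↥(Set.Iio lam.ord)) :
    sigmaM κ lam a b (x, Ici η, Ici η) = b η := by
  have hinf := sInf_image_val_Ici η
  rw [sigmaM, if_neg (by simp [nonempty_Ici.ne_empty]), union_self, dif_pos (hinf ▸ η.2)]
  exact congrArg b (Subtype.ext hinf)

end Triples

lemma map_inf_of_map_finset_inf {α L : Type*} [Lattice α] [OrderTop α] [Lattice L]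
    {P : Set α} {f : α → L}
    (hf : ∀ Y : Finset α, ∀ hY : Y.Nonempty, ↑Y ⊆ P → Y.inf id ∈ P → f (Y.inf id) = Y.inf' hY f)
    {x y : α} (hx : x ∈ P) (hy : y ∈ P) (hxy : x ⊓ y ∈ P) : f (x ⊓ y) = f x ⊓ f y := by
  classical
  have hsub : ↑({x, y} : Finset α) ⊆ P := by simp [insert_subset_iff, hx, hy]
  simpa using hf {x, y} (Finset.insert_nonempty _ _) hsub (by simpa using hxy)

lemma monotone_left_of_triangle {L S : Type*} [Preorder L] [SemilatticeSup S] [OrderBot S]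
    {ν : L → L → S} (hle : ∀ x y, x ≤ y → ν x y = ⊥) (htri : ∀ x y z, ν x z ≤ ν x y ⊔ ν y z)
    (z : L) : Monotone (ν · z) := fun x y hxy => by
  simpa [hle x y hxy] using htri x y z

section Separation

variable {κ lam : Cardinal} {L : Type*} [Lattice L] {f : Amb κ lam → L}
  (hf_mono : ∀ x ∈ PkSet κ lam, ∀ y ∈ PkSet κ lam, x ≤ y → f x ≤ f y)
include hf_mono

lemma map_Iic_le_inf (hκ : Order.IsSuccLimit κ.ord) (hlam : 0 < lam.ord)
    (ξ : ↥(Set.Iio κ.ord)) :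
    f (Iic ξ, ∅, ∅) ≤ f (Set.univ, Set.univ, ∅) ⊓ f (Set.univ, ∅, Set.univ) := by
  have hξ := Iic_mem_PkSet (lam := lam) hκ hlam ξ
  have hU : Set.univ ∈ IntP ↥(Set.Iio lam.ord) := isLowerSet_univ.mem_IntP
  have hE : ∅ ∈ IntP ↥(Set.Iio lam.ord) := isLowerSet_empty.mem_IntP
  exact le_inf
    (hf_mono _ hξ _ (unbounded_mem_PkSet hU hE (.inl chiO_univ)) (by simp))
    (hf_mono _ hξ _ (unbounded_mem_PkSet hE hU (.inr chiO_univ)) (by simp))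

lemma inf_le_map_Ici
    (hf_inf : ∀ Y : Finset (Amb κ lam), ∀ hY : Y.Nonempty, ↑Y ⊆ PkSet κ lam →
      Y.inf id ∈ PkSet κ lam → f (Y.inf id) = Y.inf' hY f)
    (η : ↥(Set.Iio lam.ord)) :
    f (Set.univ, Set.univ, ∅) ⊓ f (Set.univ, ∅, Set.univ) ≤ f (Set.univ, Ici η, Ici η) := by
  have hU : Set.univ ∈ IntP ↥(Set.Iio lam.ord) := isLowerSet_univ.mem_IntP
  have hE : ∅ ∈ IntP ↥(Set.Iio lam.ord) := isLowerSet_empty.mem_IntP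
  have hT : Ici η ∈ IntP ↥(Set.Iio lam.ord) := (isUpperSet_Ici η).mem_IntP
  have hw₁ := unbounded_mem_PkSet (κ := κ) hU hT (.inl chiO_univ)
  have hw₂ := unbounded_mem_PkSet (κ := κ) hT hU (.inr chiO_univ)
  have hw : ((Set.univ, Ici η, Ici η) : Amb κ lam) =
      (Set.univ, Set.univ, Ici η) ⊓ (Set.univ, Ici η, Set.univ) := by
    simp [Prod.inf_def]
  rw [hw, map_inf_of_map_finset_inf hf_inf hw₁ hw₂ (hw ▸ Ici_mem_PkSet η)]
  exact inf_le_inf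
    (hf_mono _ (unbounded_mem_PkSet hU hE (.inl chiO_univ)) _ hw₁ (by simp))
    (hf_mono _ (unbounded_mem_PkSet hE hU (.inr chiO_univ)) _ hw₂ (by simp))

end Separation

theorem interpolation_of_mu_factors.{u} (κ lam : Cardinal) (hκ : ℵ₀ ≤ κ) (hlam : ℵ₀ ≤ lam)
    {S : Type*} [SemilatticeSup S] [OrderBot S]
    (a : ↥(Set.Iio κ.ord) → S) (b : ↥(Set.Iio lam.ord) → S)
    (ha : Monotone a) (hb : Antitone b)
    (ha0 : ∀ ξ : ↥(Set.Iio κ.ord), (ξ : Ordinal) = 0 → a ξ = ⊥)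
    (hab : ∀ ξ η, a ξ ≤ b η)
    (L : Type u) [Lattice L] (f : Amb κ lam → L)
    (hf_mono : ∀ x ∈ PkSet κ lam, ∀ y ∈ PkSet κ lam, x ≤ y → f x ≤ f y)
    (hf_sup : ∀ X : Finset (Amb κ lam), ∀ hX : X.Nonempty, ↑X ⊆ PkSet κ lam →
      X.sup id ∈ PkSet κ lam → f (X.sup id) = X.sup' hX f)
    (hf_inf : ∀ Y : Finset (Amb κ lam), ∀ hY : Y.Nonempty, ↑Y ⊆ PkSet κ lam →
      Y.inf id ∈ PkSet κ lam → f (Y.inf id) = Y.inf' hY f)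
    (ν : L → L → S)
    (hν_le : ∀ x y : L, x ≤ y → ν x y = ⊥)
    (hν_tri : ∀ x y z : L, ν x z ≤ ν x y ⊔ ν y z)
    (hν_sup : ∀ x y z : L, ν (x ⊔ y) z = ν x z ⊔ ν y z)
    (hν_inf : ∀ x y z : L, ν x (y ⊓ z) = ν x y ⊔ ν x z)
    (hfac : ∀ x ∈ PkSet κ lam, ∀ y ∈ PkSet κ lam, muM κ lam a b x y = ν (f x) (f y)) :
    ∃ c : S, (∀ ξ, a ξ ≤ c) ∧ ∀ η, c ≤ b η := by
  have hκ' : Order.IsSuccLimit κ.ord := isSuccLimit_ord hκ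
  have hlam' : 0 < lam.ord := (isSuccLimit_ord hlam).pos
  have hbot : (⊥ : Amb κ lam) ∈ PkSet κ lam :=
    bounded_mem_PkSet isLowerSet_empty.mem_IntP (chiO_empty hκ'.pos) hlam'
  have hν_mono := monotone_left_of_triangle hν_le hν_tri (f ⊥)
  set m := f (Set.univ, Set.univ, ∅) ⊓ f (Set.univ, ∅, Set.univ)
  refine ⟨ν m (f ⊥), fun ξ => ?_, fun η => ?_⟩
  · calc a ξ = ν (f (Iic ξ, ∅, ∅)) (f ⊥) := by
          rw [← hfac _ (Iic_mem_PkSet hκ' hlam' ξ) _ hbot, muM_bot, sigmaM_Iic]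
      _ ≤ ν m (f ⊥) := hν_mono (map_Iic_le_inf hf_mono hκ' hlam' ξ)
  · calc ν m (f ⊥) ≤ ν (f (Set.univ, Ici η, Ici η)) (f ⊥) :=
          hν_mono (inf_le_map_Ici hf_mono hf_inf η)
      _ = b η := by rw [← hfac _ (Ici_mem_PkSet η) _ hbot, muM_bot, sigmaM_Ici]
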